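/- If an abelian group G exhibits the Specker phenomenon, then G is binding; in fact, if (a_n) witnesses the Specker phenomenon, then G binds the subgroup H generated by the a_n. -/

import Mathlib

/-!
If the images `b n = f (a n)` in `ι →₀ ℤ` had supports escaping every finite set, one could
pick indices `n k` and coordinates `i k ∈ supp (b (n k))` outside the supports of all earlier
`b (n j)`. The matrix `b (n k) (i j)` is then lower triangular with nonzero diagonal, so a
functional `c` supported on the `i k` can be chosen coordinate by coordinate to be nonzero on
every `b (n k)`, contradicting the hypothesis for `c ∘ f`. Hence all `b n` lie in
`Finsupp.supported ℤ ℤ S` for a finite `S`, which has finite rank.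
-/

open Cardinal

/-- `G` binds a subgroup `H` if every homomorphism from `G` to a free abelian
group maps `H` into a subgroup of finite rank. -/
def Binds.{u} {G : Type*} [AddCommGroup G] (H : AddSubgroup G) : Prop :=
  ∀ (ι : Type u) (f : G →+ (ι →₀ ℤ)), Module.rank ℤ (H.map f) < ℵ₀

open Finset Function

theorem Finset.exists_seq_mem_notMem_of_forall_not_subset {ι : Type*}
    {s : ℕ → Finset ι} (h : ∀ S : Finset ι, ∃ n, ¬s n ⊆ S) :
    ∃ (n : ℕ → ℕ) (i : ℕ → ι), ∀ k, i k ∈ s (n k) ∧ ∀ j < k, i k ∉ s (n j) := by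
  classical
  choose g hg using h
  choose p hp hpS using fun S => Finset.not_subset.1 (hg S)
  let T : ℕ → Finset ι := fun k => Nat.rec ∅ (fun _ T => T ∪ s (g T)) k
  have hT : Monotone T := monotone_nat_of_le_succ fun _ => subset_union_left
  refine ⟨fun k => g (T k), fun k => p (T k), fun k => ⟨hp _, fun j hj hmem =>
    hpS (T k) (hT hj (subset_union_right hmem))⟩⟩

section Semiring

variable {R : Type*} [Semiring R]

open Classical in
noncomputable def nonvanishingCoeffs (β : ℕ → ℕ → R) (k : ℕ) : R :=
  if ∑ j : Fin k, β k j * nonvanishingCoeffs β j = 0 then 1 else 0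
termination_by k
decreasing_by exact j.isLt

theorem sum_range_succ_mul_nonvanishingCoeffs_ne_zero {β : ℕ → ℕ → R} (hβ : ∀ k, β k k ≠ 0)
    (k : ℕ) : ∑ j ∈ range (k + 1), β k j * nonvanishingCoeffs β j ≠ 0 := by
  rw [sum_range_succ, ← Fin.sum_univ_eq_sum_range, nonvanishingCoeffs.eq_1 β k]
  split_ifs with h
  · simpa [h] using hβ k
  · simpa using h

theorem Finsupp.linearCombination_extend_eq_sum_range {ι : Type*} {i : ℕ → ι}
    (hi : Injective i) (x : ℕ → R) {v : ι →₀ R} {k : ℕ} (hv : ∀ j, k < j → v (i j) = 0) :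
    Finsupp.linearCombination R (extend i x 0) v = ∑ j ∈ range (k + 1), v (i j) * x j := by
  rw [Finsupp.linearCombination_apply, Finsupp.sum]
  symm
  refine sum_bij_ne_zero (fun j _ _ => i j) ?_ ?_ ?_ ?_
  · intro j _ hj
    exact Finsupp.mem_support_iff.2 (left_ne_zero_of_mul hj)
  · exact fun _ _ _ _ _ _ h => hi h
  · intro m _ hm
    obtain ⟨j, rfl⟩ : ∃ j, i j = m := by
      by_contra hmi
      simp [extend_apply' _ _ _ hmi] at hm
    refine ⟨j, mem_range.2 (Nat.lt_succ_of_le (not_lt.1 fun hkj => ?_)), ?_, rfl⟩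
    · simp [hv j hkj] at hm
    · simpa [hi.extend_apply] using hm
  · intro j _ _
    simp [hi.extend_apply]

theorem Finsupp.exists_finset_forall_support_subset {ι : Type*}
    (b : ℕ → ι →₀ R) (h : ∀ c : ι → R, {n | Finsupp.linearCombination R c (b n) ≠ 0}.Finite) :
    ∃ S : Finset ι, ∀ n, (b n).support ⊆ S := by
  by_contra! hb
  obtain ⟨n, i, hni⟩ := exists_seq_mem_notMem_of_forall_not_subset hb
  have hn : Injective n := .of_lt_imp_ne fun j k hjk hn => (hni k).2 j hjk (hn ▸ (hni k).1)
  have hi : Injective i := .of_lt_imp_ne fun j k hjk hi => (hni k).2 j hjk (hi ▸ (hni j).1)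
  let β k j := b (n k) (i j)
  have hβ : ∀ k, β k k ≠ 0 := fun k => Finsupp.mem_support_iff.1 (hni k).1
  have hc : ∀ k,
      Finsupp.linearCombination R (extend i (nonvanishingCoeffs β) 0) (b (n k)) ≠ 0 := by
    intro k
    rw [linearCombination_extend_eq_sum_range hi _ fun j hkj =>
      Finsupp.notMem_support_iff.1 ((hni j).2 k hkj)]
    exact sum_range_succ_mul_nonvanishingCoeffs_ne_zero hβ k
  exact Set.infinite_range_of_injective hn ((h _).subset (Set.range_subset_iff.2 hc))

end Semiring

theorem AddSubgroup.rank_closure_lt_aleph0_of_support_subset {ι : Type*} {s : Set (ι →₀ ℤ)}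
    (S : Finset ι) (h : ∀ v ∈ s, v.support ⊆ S) :
    Module.rank ℤ (AddSubgroup.closure s) < ℵ₀ := by
  have hle :
      AddSubgroup.toIntSubmodule (AddSubgroup.closure s) ≤ Finsupp.supported ℤ ℤ (S : Set ι) :=
    (AddSubgroup.closure_le (Finsupp.supported ℤ ℤ (S : Set ι)).toAddSubgroup).2
      fun v hv => (Finsupp.mem_supported ℤ v).2 (h v hv)
  calc Module.rank ℤ (AddSubgroup.closure s)
      ≤ Module.rank ℤ (Finsupp.supported ℤ ℤ (S : Set ι)) := Submodule.rank_mono hle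
    _ = Module.rank ℤ ((S : Set ι) →₀ ℤ) := (Finsupp.supportedEquivFinsupp _).rank_eq
    _ < ℵ₀ := Module.rank_lt_aleph0 ℤ _

theorem stmt_12.{u} {G : Type*} [AddCommGroup G] (a : ℕ → G)
    (hSpecker : ∀ f : G →+ ℤ, {n : ℕ | f (a n) ≠ 0}.Finite) :
    Binds.{u} (AddSubgroup.closure (Set.range a)) := by
  intro ι f
  obtain ⟨S, hS⟩ := Finsupp.exists_finset_forall_support_subset (fun n => f (a n))
    fun c => hSpecker ((Finsupp.linearCombination ℤ c).toAddMonoidHom.comp f)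
  rw [AddMonoidHom.map_closure, ← Set.range_comp]
  exact AddSubgroup.rank_closure_lt_aleph0_of_support_subset S (Set.forall_mem_range.2 hS)
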